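/- Let γ : [x,∞) → [0,1) be measurable, let X : [0,∞) → ℝ be a càdlàg function without upward jumps with X_0 = x and running maximum X̄, and define the latent tax process U_t = X_t - ∫_{(0,t]} γ(X̄_s) dX̄_s. Define γ̄_x(s) = x + ∫_x^s (1 - γ(y)) dy for s ≥ x. Then the running maximum of U satisfies Ū_t = γ̄_x(X̄_t) for all t ≥ 0. -/

import Mathlib

open MeasureTheory Set Filter

/-- Running maximum of a path on `[0, t]`. -/
noncomputable def runMax (X : ℝ → ℝ) (t : ℝ) : ℝ := sSup (X '' Set.Icc 0 t)

/-! Since `X` has no upward jumps, its running maximum `X̄` is continuous, so `X̄` pushes the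
Stieltjes measure `dX̄` on `(0, t]` forward to Lebesgue measure on `(x, X̄_t]`. Hence
`U_t = X_t - G(X̄_t)` with `G r = ∫_x^r γ`. Both `G` and `r ↦ r - G r = γ̄_x(r)` are nondecreasing,
so `U_s ≤ X̄_s - G(X̄_s) ≤ X̄_t - G(X̄_t)` for `s ≤ t`, while `sup_{s ≤ t} U_s ≥ X̄_t - G(X̄_t)`
because `U_s ≥ X_s - G(X̄_t)`. -/

open Topology

section RunningMaximum

variable {X Y : ℝ → ℝ} {s t c : ℝ}

theorem runMax_zero (X : ℝ → ℝ) : runMax X 0 = X 0 := by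
  simp [runMax]

theorem le_runMax (hX : BddAbove (X '' Icc 0 t)) (hs : s ∈ Icc 0 t) : X s ≤ runMax X t :=
  le_csSup hX (mem_image_of_mem X hs)

theorem runMax_le (ht : 0 ≤ t) (h : ∀ s ∈ Icc 0 t, X s ≤ c) : runMax X t ≤ c :=
  csSup_le ((nonempty_Icc.2 ht).image X) (forall_mem_image.2 h)

theorem runMax_mono (hX : BddAbove (X '' Icc 0 t)) (hs : 0 ≤ s) (hst : s ≤ t) :
    runMax X s ≤ runMax X t :=
  runMax_le hs fun _ hu => le_runMax hX ⟨hu.1, hu.2.trans hst⟩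

theorem runMax_congr (h : EqOn X Y (Icc 0 t)) : runMax X t = runMax Y t := by
  rw [runMax, runMax, h.image_eq]

end RunningMaximum

theorem bddAbove_image_Icc_of_cadlag {X : ℝ → ℝ} {a b : ℝ}
    (hrc : ∀ s ∈ Icc a b, ContinuousWithinAt X (Ici s) s)
    (hll : ∀ s ∈ Ioc a b, ∃ l, Tendsto X (𝓝[<] s) (𝓝 l)) :
    BddAbove (X '' Icc a b) := by
  refine isCompact_Icc.induction_on (p := fun S => BddAbove (X '' S)) (by simp)
    (fun _ _ hST hT => hT.mono (image_mono hST)) (fun _ _ hS hT => by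
      simpa only [image_union, bddAbove_union] using And.intro hS hT) fun s hs => ?_
  suffices ∃ c, ∀ᶠ u in 𝓝[Icc a b] s, X u < c by
    obtain ⟨c, hc⟩ := this
    exact ⟨_, hc, ⟨c, forall_mem_image.2 fun u hu => le_of_lt hu⟩⟩
  have hright : ∀ᶠ u in 𝓝[≥] s, X u < X s + 1 :=
    (hrc s hs).eventually (gt_mem_nhds (lt_add_one _))
  rcases hs.1.eq_or_lt with rfl | has
  · exact ⟨_, nhdsWithin_mono _ Icc_subset_Ici_self hright⟩
  obtain ⟨l, hl⟩ := hll s ⟨has, hs.2⟩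
  have hleft : ∀ᶠ u in 𝓝[<] s, X u < l + 1 := hl.eventually (gt_mem_nhds (lt_add_one _))
  refine ⟨max (X s + 1) (l + 1), nhdsWithin_le_nhds ?_⟩
  rw [← nhdsLT_sup_nhdsGE]
  exact mem_sup.2 ⟨hleft.mono fun u hu => lt_max_of_lt_right hu,
    hright.mono fun u hu => lt_max_of_lt_left hu⟩

theorem continuousWithinAt_runMax_Iic {X : ℝ → ℝ} {b l : ℝ} (hb : 0 < b)
    (hX : BddAbove (X '' Icc 0 b)) (hl : Tendsto X (𝓝[<] b) (𝓝 l)) (hXl : X b ≤ l) :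
    ContinuousWithinAt (runMax X) (Iic b) b := by
  have hXv : ∀ {v}, v ≤ b → BddAbove (X '' Icc 0 v) := fun hv =>
    hX.mono (image_mono (Icc_subset_Icc_right hv))
  have hbdd : BddAbove (runMax X '' Ioo 0 b) :=
    ⟨runMax X b, forall_mem_image.2 fun v hv => runMax_mono hX hv.1.le hv.2.le⟩
  have hlim := MonotoneOn.tendsto_nhdsWithin_Ioo_left (nonempty_Ioo.2 hb)
    (fun u hu v hv huv => runMax_mono (hXv hv.2.le) hu.1.le huv) hbdd
  set S := sSup (runMax X '' Ioo 0 b)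
  have hS : ∀ v ∈ Ioo 0 b, runMax X v ≤ S := fun v hv => le_csSup hbdd (mem_image_of_mem _ hv)
  suffices S = runMax X b by
    rw [← continuousWithinAt_Iio_iff_Iic, ContinuousWithinAt, ← this]
    exact hlim
  refine le_antisymm (csSup_le ((nonempty_Ioo.2 hb).image _)
    (forall_mem_image.2 fun v hv => runMax_mono hX hv.1.le hv.2.le))
    (runMax_le hb.le fun u hu => ?_)
  rcases hu.2.eq_or_lt with rfl | hub
  · refine hXl.trans (le_of_tendsto hl ?_)
    filter_upwards [Ioo_mem_nhdsLT hb] with v hv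
    exact (le_runMax (hXv hv.2.le) ⟨hv.1.le, le_rfl⟩).trans (hS v hv)
  · have hv : (u + b) / 2 ∈ Ioo 0 b := ⟨by linarith [hu.1], by linarith⟩
    exact (le_runMax (hXv hv.2.le) ⟨hu.1, by linarith⟩).trans (hS _ hv)

theorem StieltjesFunction.continuousOn_Icc_of_eqOn {F : StieltjesFunction ℝ} {f : ℝ → ℝ}
    {a b : ℝ} (hF : EqOn F f (Icc a b)) (hf : ∀ s ∈ Ioc a b, ContinuousWithinAt f (Icc a s) s) :
    ContinuousOn F (Icc a b) := by
  intro s hs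
  have hleft : ContinuousWithinAt F (Icc a s) s := by
    rcases hs.1.eq_or_lt with rfl | has
    · rw [Icc_self]
      exact continuousWithinAt_singleton
    · exact (hf s ⟨has, hs.2⟩).congr (fun u hu => hF ⟨hu.1, hu.2.trans hs.2⟩) (hF hs)
  exact (hleft.union (F.right_continuous s)).mono fun u hu =>
    (le_total u s).imp (fun h => ⟨hu.1, h⟩) id

theorem Monotone.exists_preimage_Iic_inter_Ioc_eq {f : ℝ → ℝ} (hf : Monotone f) {a b c : ℝ}
    (hab : a ≤ b) (hfc : ContinuousOn f (Icc a b)) (hc : f a ≤ c) :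
    ∃ m ∈ Icc a b, f m = min (f b) c ∧ f ⁻¹' Iic c ∩ Ioc a b = Ioc a m := by
  have hK : IsCompact (Icc a b ∩ f ⁻¹' Iic c) := isCompact_Icc.of_isClosed_subset
    (hfc.preimage_isClosed_of_isClosed isClosed_Icc isClosed_Iic) inter_subset_left
  obtain ⟨m, ⟨hm, hfm⟩, hmax⟩ := hK.exists_isGreatest ⟨a, left_mem_Icc.2 hab, hc⟩
  obtain ⟨u, hu, hfu⟩ := intermediate_value_Icc hm.2 (hfc.mono (Icc_subset_Icc_left hm.1))
    ⟨le_min (hf hm.2) hfm, min_le_left _ _⟩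
  have hfuc : f u ≤ c := hfu ▸ min_le_right _ _
  have hum : u = m := le_antisymm (hmax ⟨⟨hm.1.trans hu.1, hu.2⟩, hfuc⟩) hu.1
  refine ⟨m, hm, hum ▸ hfu, Subset.antisymm ?_ ?_⟩
  · exact fun v hv => ⟨hv.2.1, hmax ⟨Ioc_subset_Icc_self hv.2, hv.1⟩⟩
  · exact fun v hv => ⟨(hf hv.2).trans hfm, hv.1, hv.2.trans hm.2⟩

theorem StieltjesFunction.map_restrict_Ioc {F : StieltjesFunction ℝ} {a b : ℝ} (hab : a ≤ b)
    (hF : ContinuousOn F (Icc a b)) :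
    (F.measure.restrict (Ioc a b)).map F = volume.restrict (Ioc (F a) (F b)) := by
  have : IsFiniteMeasure (F.measure.restrict (Ioc a b)) :=
    ⟨by simp [F.measure_Ioc]⟩
  refine Measure.ext_of_Iic _ _ fun c => ?_
  rw [Measure.map_apply F.mono.measurable measurableSet_Iic,
    Measure.restrict_apply (F.mono.measurable measurableSet_Iic),
    Measure.restrict_apply measurableSet_Iic, inter_comm (Iic c), Ioc_inter_Iic, Real.volume_Ioc]
  rcases lt_or_ge c (F a) with hc | hc
  · have hempty : F ⁻¹' Iic c ∩ Ioc a b = ∅ :=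
      eq_empty_of_forall_notMem fun v hv => (hc.trans_le (F.mono hv.2.1.le)).not_ge hv.1
    rw [hempty, measure_empty, eq_comm, ENNReal.ofReal_eq_zero]
    linarith [min_le_right (F b) c]
  · obtain ⟨m, -, hFm, hpre⟩ := F.mono.exists_preimage_Iic_inter_Ioc_eq hab hF hc
    rw [hpre, F.measure_Ioc, hFm]

theorem StieltjesFunction.setIntegral_comp_Ioc {E : Type*} [NormedAddCommGroup E]
    [NormedSpace ℝ E] {F : StieltjesFunction ℝ} {a b : ℝ} (hab : a ≤ b)
    (hF : ContinuousOn F (Icc a b)) {g : ℝ → E}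
    (hg : AEStronglyMeasurable g (volume.restrict (Ioc (F a) (F b)))) :
    ∫ s in Ioc a b, g (F s) ∂F.measure = ∫ y in F a..F b, g y := by
  rw [intervalIntegral.integral_of_le (F.mono hab), ← F.map_restrict_Ioc hab hF,
    integral_map F.mono.measurable.aemeasurable (by rwa [F.map_restrict_Ioc hab hF])]

theorem integral_comp_runMax {E : Type*} [NormedAddCommGroup E] [NormedSpace ℝ E]
    {X : ℝ → ℝ} {F : StieltjesFunction ℝ} {t : ℝ} (hF : EqOn F (runMax X) (Icc 0 t))
    (ht : 0 ≤ t) (hFc : ContinuousOn F (Icc 0 t)) {g : ℝ → E}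
    (hg : AEStronglyMeasurable g (volume.restrict (Ioc (X 0) (runMax X t)))) :
    ∫ s in Ioc 0 t, g (runMax X s) ∂F.measure = ∫ y in X 0..runMax X t, g y := by
  have hF0 : F 0 = X 0 := (hF ⟨le_rfl, ht⟩).trans (runMax_zero X)
  rw [← hF0, ← hF ⟨ht, le_rfl⟩, ← F.setIntegral_comp_Ioc ht hFc (by rwa [hF0, hF ⟨ht, le_rfl⟩])]
  exact setIntegral_congr_fun measurableSet_Ioc fun u hu => by rw [hF (Ioc_subset_Icc_self hu)]

section BoundedIntegrand

variable {γ : ℝ → ℝ} {a r : ℝ}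

theorem intervalIntegrable_of_nonneg_of_le_one (hγm : Measurable γ)
    (hγ : ∀ y ≥ a, 0 ≤ γ y ∧ γ y ≤ 1) (hr : a ≤ r) : IntervalIntegrable γ volume a r :=
  (intervalIntegrable_const (c := (1 : ℝ))).mono_fun hγm.aestronglyMeasurable
    ((ae_restrict_iff' measurableSet_uIoc).2 (ae_of_all _ fun y hy => by
      rw [uIoc_of_le hr] at hy
      have := hγ y hy.1.le
      simpa only [norm_one, Real.norm_of_nonneg this.1] using this.2))

theorem sub_intervalIntegral_eq_add (hγi : IntervalIntegrable γ volume a r) :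
    r - ∫ y in a..r, γ y = a + ∫ y in a..r, (1 - γ y) := by
  rw [intervalIntegral.integral_sub intervalIntegrable_const hγi,
    intervalIntegral.integral_const, smul_eq_mul, mul_one]
  ring

theorem monotoneOn_intervalIntegral_Ici {f : ℝ → ℝ}
    (hf : ∀ r ≥ a, IntervalIntegrable f volume a r) (hf₀ : ∀ y ≥ a, 0 ≤ f y) :
    MonotoneOn (fun r => ∫ y in a..r, f y) (Ici a) := fun _ hr r' hr' hrr' =>
  intervalIntegral.integral_mono_interval le_rfl hr hrr'
    ((ae_restrict_iff' measurableSet_Ioc).2 (ae_of_all _ fun y hy => hf₀ y hy.1.le)) (hf r' hr')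

theorem monotoneOn_sub_intervalIntegral_Ici (hγm : Measurable γ)
    (hγ : ∀ y ≥ a, 0 ≤ γ y ∧ γ y ≤ 1) : MonotoneOn (fun r => r - ∫ y in a..r, γ y) (Ici a) :=
  ((monotoneOn_intervalIntegral_Ici
    (fun _ hr => intervalIntegrable_const.sub (intervalIntegrable_of_nonneg_of_le_one hγm hγ hr))
    fun y hy => sub_nonneg.2 (hγ y hy).2).const_add a).congr fun _ hr =>
      (sub_intervalIntegral_eq_add (intervalIntegrable_of_nonneg_of_le_one hγm hγ hr)).symm

end BoundedIntegrand

theorem runMax_sub_comp_runMax {X G : ℝ → ℝ} {t : ℝ} (ht : 0 ≤ t)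
    (hX : BddAbove (X '' Icc 0 t)) (hG : MonotoneOn G (Ici (X 0)))
    (hG' : MonotoneOn (fun r => r - G r) (Ici (X 0))) :
    runMax (fun s => X s - G (runMax X s)) t = runMax X t - G (runMax X t) := by
  have hXs : ∀ {s}, s ∈ Icc 0 t → BddAbove (X '' Icc 0 s) := fun hs =>
    hX.mono (image_mono (Icc_subset_Icc_right hs.2))
  have hge : ∀ {s}, s ∈ Icc 0 t → runMax X s ∈ Ici (X 0) := fun hs =>
    le_runMax (hXs hs) ⟨le_rfl, hs.1⟩
  have hle : ∀ {s}, s ∈ Icc 0 t → runMax X s ≤ runMax X t := fun hs => runMax_mono hX hs.1 hs.2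
  have htt : t ∈ Icc 0 t := ⟨ht, le_rfl⟩
  have hupper : ∀ s ∈ Icc 0 t, X s - G (runMax X s) ≤ runMax X t - G (runMax X t) :=
    fun s hs => calc
      X s - G (runMax X s) ≤ runMax X s - G (runMax X s) :=
        sub_le_sub_right (le_runMax (hXs hs) ⟨hs.1, le_rfl⟩) _
      _ ≤ runMax X t - G (runMax X t) := hG' (hge hs) (hge htt) (hle hs)
  refine le_antisymm (runMax_le ht hupper) ?_
  have hbdd : BddAbove ((fun s => X s - G (runMax X s)) '' Icc 0 t) :=
    ⟨_, forall_mem_image.2 hupper⟩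
  rw [sub_le_iff_le_add]
  refine runMax_le ht fun s hs => ?_
  calc X s = (X s - G (runMax X s)) + G (runMax X s) := by ring
    _ ≤ runMax (fun s => X s - G (runMax X s)) t + G (runMax X t) :=
      add_le_add (le_runMax hbdd hs) (hG (hge hs) (hge htt) (hle hs))

theorem latent_tax_running_max
    (x : ℝ) (X : ℝ → ℝ)
    (hX0 : X 0 = x)
    (hrc : ∀ t ≥ (0:ℝ), ContinuousWithinAt X (Set.Ici t) t)
    (hll : ∀ t > (0:ℝ), ∃ l : ℝ, Tendsto X (nhdsWithin t (Set.Iio t)) (nhds l))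
    (hnuj : ∀ t > (0:ℝ), ∀ l : ℝ,
      Tendsto X (nhdsWithin t (Set.Iio t)) (nhds l) → X t ≤ l)
    (F : StieltjesFunction ℝ) (hF : ∀ t ≥ (0:ℝ), F t = runMax X t)
    (γ : ℝ → ℝ) (hγmeas : Measurable γ)
    (hγ : ∀ y ≥ x, 0 ≤ γ y ∧ γ y < 1)
    (U : ℝ → ℝ)
    (hU : ∀ t ≥ (0:ℝ), U t = X t - ∫ s in Set.Ioc 0 t, γ (runMax X s) ∂F.measure)
    (γbar : ℝ → ℝ)
    (hγbar : ∀ s ≥ x, γbar s = x + ∫ y in x..s, (1 - γ y)) :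
    ∀ t ≥ (0:ℝ), runMax U t = γbar (runMax X t) := by
  subst hX0
  intro t ht
  have hbdd : ∀ r, BddAbove (X '' Icc 0 r) := fun r =>
    bddAbove_image_Icc_of_cadlag (fun s hs => hrc s hs.1) (fun s hs => hll s hs.1)
  have hFcont : ∀ r, ContinuousOn F (Icc 0 r) := fun r =>
    F.continuousOn_Icc_of_eqOn (fun s hs => hF s hs.1) fun s hs => by
      obtain ⟨l, hl⟩ := hll s hs.1
      exact (continuousWithinAt_runMax_Iic hs.1 (hbdd s) hl (hnuj s hs.1 l hl)).mono
        Icc_subset_Iic_self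
  have hγ' : ∀ y ≥ X 0, 0 ≤ γ y ∧ γ y ≤ 1 := fun y hy => ⟨(hγ y hy).1, (hγ y hy).2.le⟩
  have hU' : EqOn U (fun s => X s - ∫ y in X 0..runMax X s, γ y) (Icc 0 t) := fun s hs =>
    (hU s hs.1).trans <| congrArg _ <| integral_comp_runMax (fun u hu => hF u hu.1) hs.1
      (hFcont s) hγmeas.aestronglyMeasurable
  have hγi : ∀ r ≥ X 0, IntervalIntegrable γ volume (X 0) r := fun _ hr =>
    intervalIntegrable_of_nonneg_of_le_one hγmeas hγ' hr
  have hx : X 0 ≤ runMax X t := le_runMax (hbdd t) ⟨le_rfl, ht⟩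
  rw [runMax_congr hU', runMax_sub_comp_runMax ht (hbdd t)
      (monotoneOn_intervalIntegral_Ici hγi fun y hy => (hγ' y hy).1)
      (monotoneOn_sub_intervalIntegral_Ici hγmeas hγ'),
    hγbar _ hx, sub_intervalIntegral_eq_add (hγi _ hx)]
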